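/- arXiv:1406.3831 — 2 statements merged into one kernel-verified Lean document; each statement's English description precedes it below -/
import Mathlib

section
/- Let G be a nonzero real M×N matrix with M ≤ N. Then r(G) = M if and only if G·Gᵀ is a positive scalar multiple of the M×M identity matrix (equivalently, the rows of G are pairwise orthogonal and all have the same nonzero Euclidean norm). In particular, if the rows of G are pairwise orthogonal with equal nonzero norm, then r(G) = M. -/
open scoped BigOperators
open Matrix

/-- The squared Frobenius norm of a real `M × N` matrix. -/
noncomputable def frobSq {M N : ℕ} (G : Matrix (Fin M) (Fin N) ℝ) : ℝ :=
  ∑ i, ∑ j, (G i j) ^ 2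

/-- The spectral (ℓ₂ operator) norm of a real `M × N` matrix. -/
noncomputable def specNorm {M N : ℕ} (G : Matrix (Fin M) (Fin N) ℝ) : ℝ :=
  ‖LinearMap.toContinuousLinearMap (Matrix.toEuclideanLin G)‖

/-- The soft-rank `r(G) = ‖G‖_F² / ‖G‖₂²` of a matrix. -/
noncomputable def softRank {M N : ℕ} (G : Matrix (Fin M) (Fin N) ℝ) : ℝ :=
  frobSq G / (specNorm G) ^ 2

/-!
With `A = G * Gᵀ`, the squared Frobenius norm of `G` is `tr A` and, by the C⋆-identity, its
squared spectral norm is `‖A‖`, so `r(G) = tr A / ‖A‖`. For Hermitian `A` the matrix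
`‖A‖ • 1 - A` is positive semidefinite, and its trace `M ‖A‖ - tr A` vanishes exactly when
`r(G) = M`. A positive semidefinite matrix of trace zero is zero, hence then `A = ‖A‖ • 1`.
-/

open scoped Matrix.Norms.L2Operator InnerProductSpace ComplexOrder

namespace LinearMap

variable {𝕜 E : Type*} [RCLike 𝕜] [NormedAddCommGroup E] [InnerProductSpace 𝕜 E]
open RCLike

theorem IsSymmetric.isPositive_smul_one_sub {T : E →ₗ[𝕜] E} (hT : T.IsSymmetric) {c : ℝ}
    (hc : ∀ x, ‖T x‖ ≤ c * ‖x‖) : ((c : 𝕜) • 1 - T).IsPositive := by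
  refine ⟨(IsSymmetric.id.smul (conj_ofReal c)).sub hT, fun x => ?_⟩
  have hle : re ⟪T x, x⟫_𝕜 ≤ re ⟪(c : 𝕜) • x, x⟫_𝕜 :=
    calc re ⟪T x, x⟫_𝕜 ≤ ‖T x‖ * ‖x‖ := re_inner_le_norm _ _
      _ ≤ c * ‖x‖ * ‖x‖ := by gcongr; exact hc x
      _ = re ⟪(c : 𝕜) • x, x⟫_𝕜 := by
        rw [inner_smul_left, inner_self_eq_norm_sq_to_K, conj_ofReal]; norm_cast; ring
  simpa [inner_sub_left] using hle

end LinearMap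

namespace Matrix

lemma mul_transpose_self_eq_smul_one_iff {m n R : Type*} [Fintype n] [DecidableEq m]
    [CommSemiring R] (G : Matrix m n R) (c : R) :
    G * Gᵀ = c • 1 ↔
      (∀ i i', i ≠ i' → ∑ j, G i j * G i' j = 0) ∧ ∀ i, ∑ j, G i j ^ 2 = c := by
  simp only [← ext_iff, mul_apply, transpose_apply, smul_apply, one_apply, smul_eq_mul,
    mul_ite, mul_one, mul_zero, sq]
  constructor
  · intro h
    exact ⟨fun i i' hii' => by simpa [hii'] using h i i', fun i => by simpa using h i i⟩
  · rintro ⟨horth, hrow⟩ i i'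
    split_ifs with hii'
    · exact hii' ▸ hrow i
    · exact horth i i' hii'

variable {m n 𝕜 : Type*} [Fintype m] [Fintype n] [RCLike 𝕜]

lemma norm_toEuclideanLin_apply_le [DecidableEq n] (A : Matrix m n 𝕜)
    (x : EuclideanSpace 𝕜 n) :
    ‖toEuclideanLin A x‖ ≤ ‖A‖ * ‖x‖ :=
  (LinearMap.toContinuousLinearMap (toEuclideanLin A)).le_opNorm x

lemma IsHermitian.posSemidef_l2_opNorm_smul_one_sub [DecidableEq n] {A : Matrix n n 𝕜}
    (hA : A.IsHermitian) : ((‖A‖ : 𝕜) • 1 - A).PosSemidef := by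
  rw [← isPositive_toEuclideanLin_iff, map_sub, map_smul]
  simpa [Module.End.one_eq_id] using
    (isSymmetric_toEuclideanLin_iff.mpr hA).isPositive_smul_one_sub (norm_toEuclideanLin_apply_le A)

lemma IsHermitian.eq_l2_opNorm_smul_one_of_trace_eq [DecidableEq n] {A : Matrix n n 𝕜}
    (hA : A.IsHermitian) (htr : A.trace = Fintype.card n * (‖A‖ : 𝕜)) :
    A = (‖A‖ : 𝕜) • 1 := by
  have hzero := hA.posSemidef_l2_opNorm_smul_one_sub.trace_eq_zero_iff.mp (by
    rw [trace_sub, trace_smul, trace_one, htr, smul_eq_mul]; ring)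
  exact (sub_eq_zero.mp hzero).symm

lemma l2_opNorm_mul_conjTranspose_self [DecidableEq m] [DecidableEq n] (A : Matrix m n 𝕜) :
    ‖A * Aᴴ‖ = ‖A‖ * ‖A‖ := by
  simpa [l2_opNorm_conjTranspose] using l2_opNorm_conjTranspose_mul_self Aᴴ

lemma l2_opNorm_smul_one [DecidableEq n] [Nonempty n] (c : 𝕜) :
    ‖c • (1 : Matrix n n 𝕜)‖ = ‖c‖ := by
  rw [norm_smul, CStarRing.norm_one, mul_one]

end Matrix

theorem specNorm_eq_l2_opNorm {M N : ℕ} (G : Matrix (Fin M) (Fin N) ℝ) : specNorm G = ‖G‖ :=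
  rfl

theorem frobSq_eq_trace_mul_transpose {M N : ℕ} (G : Matrix (Fin M) (Fin N) ℝ) :
    frobSq G = (G * Gᵀ).trace := by
  simp [frobSq, trace, mul_apply, sq]

theorem softRank_eq_trace_div_l2_opNorm {M N : ℕ} (G : Matrix (Fin M) (Fin N) ℝ) :
    softRank G = (G * Gᵀ).trace / ‖G * Gᵀ‖ := by
  rw [softRank, frobSq_eq_trace_mul_transpose, specNorm_eq_l2_opNorm, sq,
    ← l2_opNorm_mul_conjTranspose_self, conjTranspose_eq_transpose_of_trivial]

theorem softRank_eq_card_rows_iff_general {M N : ℕ}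
    (G : Matrix (Fin M) (Fin N) ℝ) (hG : G ≠ 0) :
    (softRank G = (M : ℝ) ↔
      ∃ c : ℝ, 0 < c ∧ G * Gᵀ = c • (1 : Matrix (Fin M) (Fin M) ℝ)) ∧
    (((∀ i i' : Fin M, i ≠ i' → ∑ j, G i j * G i' j = 0) ∧
        ∃ c : ℝ, 0 < c ∧ ∀ i : Fin M, ∑ j, (G i j) ^ 2 = c) →
      softRank G = (M : ℝ)) := by
  have : Nonempty (Fin M) := by
    obtain ⟨i, -⟩ := Function.ne_iff.mp hG
    exact ⟨i⟩
  have hA : (G * Gᵀ).IsHermitian := by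
    simpa using isHermitian_mul_conjTranspose_self G
  have hA_pos : 0 < ‖G * Gᵀ‖ := by
    refine norm_pos_iff.mpr fun h => hG ?_
    simpa [h] using (trace_mul_conjTranspose_self_eq_zero_iff (A := G)).mp
  have hsoftRank : softRank G = M ↔ ∃ c : ℝ, 0 < c ∧ G * Gᵀ = c • 1 := by
    rw [softRank_eq_trace_div_l2_opNorm, div_eq_iff hA_pos.ne']
    constructor
    · intro h
      exact ⟨_, hA_pos, by simpa using hA.eq_l2_opNorm_smul_one_of_trace_eq (by simpa using h)⟩
    · rintro ⟨c, hc, hAc⟩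
      rw [hAc, trace_smul, trace_one, l2_opNorm_smul_one, Real.norm_of_nonneg hc.le]
      simp [mul_comm]
  exact ⟨hsoftRank, fun ⟨horth, c, hc, hrow⟩ =>
    hsoftRank.mpr ⟨c, hc, (mul_transpose_self_eq_smul_one_iff G c).mpr ⟨horth, hrow⟩⟩⟩

/-- For a nonzero real `M × N` matrix `G` with `M ≤ N`, the soft-rank equals `M` if and only
if `G * Gᵀ` is a positive scalar multiple of the identity (equivalently, the rows of `G` are
pairwise orthogonal with equal nonzero norm).  In particular, pairwise orthogonal rows of equal
nonzero norm force `r(G) = M`. -/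
theorem softRank_eq_card_rows_iff {M N : ℕ} (hMN : M ≤ N)
    (G : Matrix (Fin M) (Fin N) ℝ) (hG : G ≠ 0) :
    (softRank G = (M : ℝ) ↔
      ∃ c : ℝ, 0 < c ∧ G * Gᵀ = c • (1 : Matrix (Fin M) (Fin M) ℝ)) ∧
    (((∀ i i' : Fin M, i ≠ i' → ∑ j, G i j * G i' j = 0) ∧
        ∃ c : ℝ, 0 < c ∧ ∀ i : Fin M, ∑ j, (G i j) ^ 2 = c) →
      softRank G = (M : ℝ)) :=
  softRank_eq_card_rows_iff_general G hG
end

section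
/- (Paper's Lemma) Consider the cyclic shift system on ℝ^N with M ≤ N delays. Then the infimum soft-rank of the attractor satisfies r(𝒜) ≥ M/2; that is, for every pair of distinct states e_a ≠ e_b of the system, the soft-rank of the difference of trajectory matrices satisfies r(G_{e_a} − G_{e_b}) ≥ M/2. -/
open scoped BigOperators
open Matrix

/-- The `N × N` cyclic shift matrix `Φ`, acting on canonical basis vectors by
`Φ e_j = e_{(j-1) mod N}`. -/
def shiftMat (N : ℕ) : Matrix (Fin N) (Fin N) ℝ :=
  Matrix.of fun i j => if ((i : ℕ) + 1) % N = (j : ℕ) then 1 else 0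

/-- The trajectory matrix `G_{e_a} ∈ ℝ^{M×N}` of the state `e_a` of the cyclic shift
system: its `m`-th row is `Φ^{-m} e_a`, where `Φ` is the cyclic shift matrix. -/
noncomputable def cyclicTrajMat (N M : ℕ) (a : Fin N) : Matrix (Fin M) (Fin N) ℝ :=
  Matrix.of fun m j => (((shiftMat N)⁻¹ ^ (m : ℕ)).mulVec (Pi.single a 1)) j

/-! Since `Φ⁻¹ = Φᵀ` shifts `e_j` to `e_{j+1}`, the trajectory matrix `G_{e_a}` consists of the rows
`a, a+1, …, a+M-1` of the identity. For `M ≤ N` these rows are distinct, so `G_{e_a}` is a partial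
isometry and `‖G_{e_a} - G_{e_b}‖₂ ≤ 2`. Each row `e_{a+m} - e_{b+m}` of the difference has squared
norm `2`, so `‖G_{e_a} - G_{e_b}‖_F² = 2M` and the soft-rank is at least `2M / 4`. -/

theorem specNorm_sub_le {M N : ℕ} (A B : Matrix (Fin M) (Fin N) ℝ) :
    specNorm (A - B) ≤ specNorm A + specNorm B := by
  simp only [specNorm, map_sub]
  exact norm_sub_le _ _

theorem specNorm_eq_zero_iff {M N : ℕ} {G : Matrix (Fin M) (Fin N) ℝ} :
    specNorm G = 0 ↔ G = 0 := by
  rw [specNorm, norm_eq_zero, LinearEquiv.map_eq_zero_iff, LinearEquiv.map_eq_zero_iff]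

theorem frobSq_nonneg {M N : ℕ} (G : Matrix (Fin M) (Fin N) ℝ) : 0 ≤ frobSq G := by
  unfold frobSq
  positivity

/-- No assumption `G ≠ 0` is needed, since `softRank 0 = 0 / 0 = 0`. -/
theorem frobSq_div_sq_le_softRank {M N : ℕ} {G : Matrix (Fin M) (Fin N) ℝ} {s : ℝ}
    (hs : specNorm G ≤ s) : frobSq G / s ^ 2 ≤ softRank G := by
  rcases eq_or_ne G 0 with rfl | hG
  · simp [softRank, frobSq]
  have hpos : 0 < specNorm G := (norm_nonneg _).lt_of_ne' (specNorm_eq_zero_iff.not.mpr hG)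
  exact div_le_div_of_nonneg_left (frobSq_nonneg G) (by positivity) (pow_le_pow_left₀ hpos.le hs 2)

section Selection

variable {M N : ℕ} {c d : Fin M → Fin N}

theorem one_submatrix_mulVec (x : Fin N → ℝ) :
    (1 : Matrix (Fin N) (Fin N) ℝ).submatrix c id *ᵥ x = x ∘ c := by
  ext m
  simp [mulVec, dotProduct, one_apply]

theorem specNorm_one_submatrix_le (hc : Function.Injective c) :
    specNorm ((1 : Matrix (Fin N) (Fin N) ℝ).submatrix c id) ≤ 1 := by
  refine ContinuousLinearMap.opNorm_le_bound _ zero_le_one fun x => ?_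
  suffices ∑ m, x (c m) ^ 2 ≤ ∑ j, x j ^ 2 by
    simpa [EuclideanSpace.norm_eq, toLpLin_apply, one_submatrix_mulVec] using
      Real.sqrt_le_sqrt this
  calc ∑ m, x (c m) ^ 2 = ∑ j ∈ Finset.univ.image c, x j ^ 2 :=
        (Finset.sum_image (f := fun j => x j ^ 2) fun m _ n _ h => hc h).symm
    _ ≤ ∑ j, x j ^ 2 :=
        Finset.sum_le_sum_of_subset_of_nonneg (Finset.subset_univ _) fun j _ _ => sq_nonneg _

theorem frobSq_one_submatrix_sub (hcd : ∀ m, c m ≠ d m) :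
    frobSq ((1 : Matrix (Fin N) (Fin N) ℝ).submatrix c id - (1 : Matrix _ _ ℝ).submatrix d id)
      = 2 * M := by
  have hrow (m : Fin M) :
      ∑ j, ((if c m = j then (1 : ℝ) else 0) - if d m = j then 1 else 0) ^ 2 = 2 := by
    rw [Finset.sum_eq_add (c m) (d m) (hcd m)] <;> grind
  simp only [frobSq, Matrix.sub_apply, submatrix_apply, id_eq, one_apply, hrow]
  simp [mul_comm]

end Selection

open Fin.NatCast

section Shift

variable {N : ℕ} [NeZero N]

theorem shiftMat_apply (i j : Fin N) : shiftMat N i j = if i + 1 = j then 1 else 0 := by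
  simp only [shiftMat, of_apply, Fin.ext_iff, Fin.val_add, Fin.val_one', Nat.add_mod_mod]

theorem shiftMat_inv : (shiftMat N)⁻¹ = (shiftMat N)ᵀ := by
  refine inv_eq_right_inv ?_
  ext i j
  simp [mul_apply, shiftMat_apply, one_apply, eq_comm]

theorem shiftMat_transpose_pow_mulVec_single (k : ℕ) (a : Fin N) :
    ((shiftMat N)ᵀ ^ k) *ᵥ Pi.single a 1 = Pi.single (a + (k : Fin N)) 1 := by
  induction k generalizing a with
  | zero => rw [pow_zero, one_mulVec, Nat.cast_zero, add_zero]
  | succ k ih =>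
    have hstep : (shiftMat N)ᵀ *ᵥ Pi.single a 1 = Pi.single (a + 1) 1 := by
      ext j
      simp [mulVec, dotProduct, shiftMat_apply, Pi.single_apply, eq_comm]
    rw [pow_succ, ← mulVec_mulVec, hstep, ih, Nat.cast_succ, add_assoc, add_comm 1]

theorem cyclicTrajMat_eq_submatrix (M : ℕ) (a : Fin N) :
    cyclicTrajMat N M a
      = (1 : Matrix (Fin N) (Fin N) ℝ).submatrix (fun m : Fin M => a + ((m : ℕ) : Fin N)) id := by
  ext m j
  rw [cyclicTrajMat, of_apply, shiftMat_inv, shiftMat_transpose_pow_mulVec_single, submatrix_apply,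
    id_eq, one_apply, Pi.single_apply]
  simp only [eq_comm]

end Shift

theorem Fin.add_natCast_injective {M N : ℕ} [NeZero N] (hMN : M ≤ N) (a : Fin N) :
    Function.Injective fun m : Fin M => a + ((m : ℕ) : Fin N) := by
  intro m₁ m₂ h
  have h' := congrArg Fin.val (add_left_cancel h)
  simp only [Fin.val_natCast, Nat.mod_eq_of_lt (m₁.isLt.trans_le hMN),
    Nat.mod_eq_of_lt (m₂.isLt.trans_le hMN)] at h'
  exact Fin.ext h'

/-- (Paper's Lemma) For the cyclic shift system on `ℝ^N` with `M ≤ N` delays, the infimum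
soft-rank of the attractor is at least `M/2`: for every pair of distinct states
`e_a ≠ e_b`, the soft-rank of `G_{e_a} - G_{e_b}` is at least `M/2`. -/
theorem cyclic_softRank_ge {N M : ℕ} (hMN : M ≤ N) (a b : Fin N) (hab : a ≠ b) :
    (M : ℝ) / 2 ≤ softRank (cyclicTrajMat N M a - cyclicTrajMat N M b) := by
  have : NeZero N := NeZero.of_pos a.pos
  rw [cyclicTrajMat_eq_submatrix, cyclicTrajMat_eq_submatrix]
  have hspec := (specNorm_sub_le _ _).trans (add_le_add
    (specNorm_one_submatrix_le (Fin.add_natCast_injective hMN a))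
    (specNorm_one_submatrix_le (Fin.add_natCast_injective hMN b)))
  have hfrob := frobSq_one_submatrix_sub (c := fun m : Fin M => a + ((m : ℕ) : Fin N))
    fun m h => hab (add_right_cancel h)
  calc (M : ℝ) / 2 = 2 * M / (1 + 1) ^ 2 := by ring
    _ ≤ _ := hfrob ▸ frobSq_div_sq_le_softRank hspec
end
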